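/- arXiv:2109.06541 — 2 statements merged into one kernel-verified Lean document; each statement's English description precedes it below -/
import Mathlib

section
/- For every prime p, every integer t ≥ 1, and every positive integer k ≤ p^t, \(\overline{M}_k(p^t) = \sum_{j=1}^{p^t} f_k\left(\left\lfloor \frac{p^t}{j}\right\rfloor\right) - \sum_{j=1}^{p^{t-1}} f_k\left(\left\lfloor \frac{p^{t-1}}{j}\right\rfloor\right) + (p-1)\sum_{s=1}^{t} p^{s-1} \sum_{m=1}^{p^{t-s}} f_k\left(\left\lfloor \frac{p^t}{1+(m-1)p^s}\right\rfloor\right)\). -/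
open Finset

/-- `fk k m` is the number of `k`-element subsets `A` of `{1, 2, ..., m}` whose elements are
relatively prime, i.e. the gcd of the elements of `A` is `1`. -/
def fk (k m : ℕ) : ℕ :=
  ((Finset.Icc 1 m).powerset.filter (fun A => A.card = k ∧ A.gcd _root_.id = 1)).card

/-- `MbarK k n = ∑ ((A) - 1, n)`, summed over all `k`-element subsets `A` of `{1, 2, ..., n}`
such that the gcd `(A)` of the elements of `A` is relatively prime to `n`. -/
def MbarK (k n : ℕ) : ℕ :=
  ∑ A ∈ (Finset.Icc 1 n).powerset.filter
      (fun A => A.card = k ∧ Nat.gcd (A.gcd _root_.id) n = 1),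
    Nat.gcd (A.gcd _root_.id - 1) n

lemma gcd_image_mul (d : ℕ) (B : Finset ℕ) :
    (B.image (· * d)).gcd _root_.id = d * B.gcd _root_.id := by
  rw [Finset.gcd_image]
  have h : B.gcd (_root_.id ∘ (· * d)) = B.gcd (fun x => d * x) :=
    Finset.gcd_congr rfl (fun x _ => by simp [mul_comm])
  rw [h, Finset.gcd_mul_left]
  simp only [normalize_eq]
  rfl

lemma image_div_mul (d : ℕ) (A : Finset ℕ) (hdvd : ∀ a ∈ A, d ∣ a) :
    (A.image (· / d)).image (· * d) = A := by
  rw [Finset.image_image]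
  refine Eq.trans (Finset.image_congr ?_) Finset.image_id
  intro a ha
  simp [Nat.div_mul_cancel (hdvd a ha)]

lemma card_gcd_eq (k n d : ℕ) (hd : 0 < d) :
    ((Finset.Icc 1 n).powerset.filter (fun A => A.card = k ∧ A.gcd _root_.id = d)).card
      = fk k (n / d) := by
  rw [fk]
  refine Finset.card_bij' (fun A _ => A.image (· / d)) (fun B _ => B.image (· * d)) ?hi ?hj ?left ?right
  case hi =>
    intro A hA
    simp only [Finset.mem_filter, Finset.mem_powerset] at hA ⊢
    obtain ⟨hsub, hcard, hgcd⟩ := hA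
    have hdvd : ∀ a ∈ A, d ∣ a := fun a ha => hgcd ▸ Finset.gcd_dvd ha
    refine ⟨?_, ?_, ?_⟩
    · intro x hx
      simp only [Finset.mem_image] at hx
      obtain ⟨a, ha, rfl⟩ := hx
      have := hsub ha
      simp only [Finset.mem_Icc] at this ⊢
      constructor
      · exact (Nat.one_le_div_iff hd).2 (Nat.le_of_dvd (by omega) (hdvd a ha))
      · exact Nat.div_le_div_right this.2
    · rw [Finset.card_image_of_injOn, hcard]
      intro a ha b hb hab
      simp only at hab
      have h1 := Nat.div_mul_cancel (hdvd a ha)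
      have h2 := Nat.div_mul_cancel (hdvd b hb)
      rw [← h1, ← h2, hab]
    · have hg : d * (A.image (· / d)).gcd _root_.id = d := by
        rw [← gcd_image_mul, image_div_mul d A hdvd, hgcd]
      exact Nat.eq_of_mul_eq_mul_left hd (by rw [hg, mul_one])
  case hj =>
    intro B hB
    simp only [Finset.mem_filter, Finset.mem_powerset] at hB ⊢
    obtain ⟨hsub, hcard, hgcd⟩ := hB
    refine ⟨?_, ?_, ?_⟩
    · intro x hx
      simp only [Finset.mem_image] at hx
      obtain ⟨b, hb, rfl⟩ := hx
      have := hsub hb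
      simp only [Finset.mem_Icc] at this ⊢
      refine ⟨Nat.mul_pos this.1 hd, ?_⟩
      calc b * d ≤ (n / d) * d := Nat.mul_le_mul_right d this.2
        _ ≤ n := Nat.div_mul_le_self n d
    · rw [Finset.card_image_of_injective _ (fun a b h => Nat.eq_of_mul_eq_mul_right hd h), hcard]
    · rw [gcd_image_mul, hgcd, mul_one]
  case left =>
    intro A hA
    simp only [Finset.mem_filter, Finset.mem_powerset] at hA
    obtain ⟨hsub, hcard, hgcd⟩ := hA
    have hdvd : ∀ a ∈ A, d ∣ a := fun a ha => hgcd ▸ Finset.gcd_dvd ha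
    exact image_div_mul d A hdvd
  case right =>
    intro B hB
    show (B.image (· * d)).image (· / d) = B
    rw [Finset.image_image]
    refine Eq.trans (Finset.image_congr ?_) Finset.image_id
    intro b hb
    simp [Nat.mul_div_cancel _ hd]

lemma MbarK_eq_sum (k n : ℕ) (hk : 0 < k) :
    MbarK k n = ∑ d ∈ (Finset.Icc 1 n).filter (fun d => Nat.gcd d n = 1),
      fk k (n / d) * Nat.gcd (d - 1) n := by
  rw [MbarK]
  rw [← Finset.sum_fiberwise_of_maps_to (g := fun A => A.gcd _root_.id)
    (t := (Finset.Icc 1 n).filter (fun d => Nat.gcd d n = 1)) ?hmap]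
  case hmap =>
    intro A hA
    simp only [Finset.mem_filter, Finset.mem_powerset] at hA ⊢
    obtain ⟨hsub, hcard, hgcd⟩ := hA
    have hne : A.Nonempty := Finset.card_pos.1 (hcard ▸ hk)
    obtain ⟨a, ha⟩ := hne
    have hmem := hsub ha
    simp only [Finset.mem_Icc] at hmem
    have hdvd : A.gcd _root_.id ∣ a := Finset.gcd_dvd ha
    refine ⟨Finset.mem_Icc.2 ⟨Nat.pos_of_dvd_of_pos hdvd hmem.1,
      le_trans (Nat.le_of_dvd (by omega) hdvd) hmem.2⟩, hgcd⟩
  refine Finset.sum_congr rfl ?_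
  intro d hd
  simp only [Finset.mem_filter, Finset.mem_Icc] at hd
  obtain ⟨⟨hd1, hdn⟩, hcop⟩ := hd
  rw [Finset.filter_filter]
  have hset : ((Finset.Icc 1 n).powerset.filter
      (fun A => (A.card = k ∧ Nat.gcd (A.gcd _root_.id) n = 1) ∧ A.gcd _root_.id = d))
      = ((Finset.Icc 1 n).powerset.filter (fun A => A.card = k ∧ A.gcd _root_.id = d)) := by
    apply Finset.filter_congr
    intro A _
    constructor
    · rintro ⟨⟨h1, _⟩, h3⟩; exact ⟨h1, h3⟩
    · rintro ⟨h1, h3⟩; exact ⟨⟨h1, h3 ▸ hcop⟩, h3⟩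
  have : ∀ A ∈ ((Finset.Icc 1 n).powerset.filter
      (fun A => (A.card = k ∧ Nat.gcd (A.gcd _root_.id) n = 1) ∧ A.gcd _root_.id = d)),
      Nat.gcd (A.gcd _root_.id - 1) n = Nat.gcd (d - 1) n := by
    intro A hA
    simp only [Finset.mem_filter] at hA
    rw [hA.2.2]
  rw [Finset.sum_congr rfl this, Finset.sum_const, hset, card_gcd_eq k n d hd1, smul_eq_mul]

lemma gcd_prime_pow_eq (p : ℕ) (hp : p.Prime) (t x : ℕ) :
    Nat.gcd x (p ^ t) = 1 + ∑ s ∈ Finset.Icc 1 t,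
      (if p ^ s ∣ x then p ^ s - p ^ (s - 1) else 0) := by
  induction t with
  | zero => simp
  | succ t ih =>
    rw [Finset.sum_Icc_succ_top (by omega : 1 ≤ t + 1)]
    by_cases h : p ^ (t + 1) ∣ x
    · have h2 : Nat.gcd x (p ^ t) = p ^ t :=
        Nat.gcd_eq_right (dvd_trans (pow_dvd_pow p (Nat.le_succ t)) h)
      have h1 : Nat.gcd x (p ^ (t + 1)) = p ^ (t + 1) := Nat.gcd_eq_right h
      have hle : p ^ t ≤ p ^ (t + 1) := Nat.pow_le_pow_right hp.pos (Nat.le_succ t)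
      rw [h1, if_pos h]
      have := ih
      rw [h2] at this
      simp only [Nat.add_sub_cancel]
      omega
    · have heq : Nat.gcd x (p ^ (t + 1)) = Nat.gcd x (p ^ t) := by
        apply Nat.dvd_antisymm
        · obtain ⟨j, hj, hg⟩ := (Nat.dvd_prime_pow hp).mp (Nat.gcd_dvd_right x (p ^ (t + 1)))
          have hjt : j ≤ t := by
            by_contra hc
            have hj' : j = t + 1 := by omega
            exact h (hj' ▸ hg ▸ Nat.gcd_dvd_left x (p ^ (t + 1)))
          exact Nat.dvd_gcd (Nat.gcd_dvd_left _ _) (hg ▸ pow_dvd_pow p hjt)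
        · exact Nat.dvd_gcd (Nat.gcd_dvd_left _ _)
            ((Nat.gcd_dvd_right _ _).trans (pow_dvd_pow p (Nat.le_succ t)))
      rw [heq, ih, if_neg h]
      simp

lemma sum_mult_p (p t k : ℕ) (hp : p.Prime) (ht : 1 ≤ t) :
    ∑ d ∈ (Finset.Icc 1 (p ^ t)).filter (fun d => p ∣ d), fk k (p ^ t / d)
      = ∑ j ∈ Finset.Icc 1 (p ^ (t - 1)), fk k (p ^ (t - 1) / j) := by
  have hppos : 0 < p := hp.pos
  have hpt : p * p ^ (t - 1) = p ^ t := by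
    rw [← pow_succ']
    congr 1
    omega
  refine Finset.sum_nbij' (fun d => d / p) (fun j => p * j) ?_ ?_ ?_ ?_ ?_
  · intro d hd
    simp only [Finset.mem_filter, Finset.mem_Icc] at hd ⊢
    obtain ⟨⟨h1, h2⟩, hdvd⟩ := hd
    constructor
    · exact (Nat.one_le_div_iff hppos).2 (Nat.le_of_dvd (by omega) hdvd)
    · exact (Nat.div_le_div_right h2).trans
        (le_of_eq (by rw [← hpt, Nat.mul_div_cancel_left _ hppos]))
  · intro j hj
    simp only [Finset.mem_filter, Finset.mem_Icc] at hj ⊢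
    refine ⟨⟨by nlinarith [hj.1], ?_⟩, Dvd.intro j rfl⟩
    calc p * j ≤ p * p ^ (t - 1) := Nat.mul_le_mul_left p hj.2
      _ = p ^ t := hpt
  · intro d hd
    simp only [Finset.mem_filter, Finset.mem_Icc] at hd
    exact Nat.mul_div_cancel' hd.2
  · intro j _
    exact Nat.mul_div_cancel_left j hppos
  · intro d hd
    simp only [Finset.mem_filter, Finset.mem_Icc] at hd
    obtain ⟨h12, c, rfl⟩ := hd
    rw [Nat.mul_div_cancel_left c hppos, ← hpt, Nat.mul_div_mul_left _ _ hppos]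

lemma coprime_of_dvd_sub (p t s d : ℕ) (hp : p.Prime) (hs : 1 ≤ s) (hd : 1 ≤ d)
    (hdvd : p ^ s ∣ d - 1) : Nat.gcd d (p ^ t) = 1 := by
  have hpd : ¬ p ∣ d := by
    intro hpdvd
    have h1 : p ∣ d - 1 := dvd_trans (dvd_pow_self p (by omega)) hdvd
    have h2 : p ∣ d - (d - 1) := Nat.dvd_sub hpdvd h1
    rw [show d - (d - 1) = 1 by omega] at h2
    have := Nat.dvd_one.mp h2
    have := hp.one_lt
    omega
  exact Nat.Coprime.pow_right t (Nat.coprime_comm.mp (hp.coprime_iff_not_dvd.mpr hpd))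

lemma sum_resid (p t s k : ℕ) (hp : p.Prime) (hs : 1 ≤ s) (hst : s ≤ t) :
    ∑ d ∈ (Finset.Icc 1 (p ^ t)).filter (fun d => p ^ s ∣ d - 1), fk k (p ^ t / d)
      = ∑ m ∈ Finset.Icc 1 (p ^ (t - s)), fk k (p ^ t / (1 + (m - 1) * p ^ s)) := by
  have hppos : 0 < p := hp.pos
  have hps : 0 < p ^ s := Nat.pow_pos hppos
  have hpts : 0 < p ^ (t - s) := Nat.pow_pos hppos
  have hmul : p ^ (t - s) * p ^ s = p ^ t := by rw [← pow_add]; congr 1; omega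
  have hpt : 0 < p ^ t := Nat.pow_pos hppos
  have hspt : p ^ s ≤ p ^ t := Nat.pow_le_pow_right hppos hst
  refine Finset.sum_nbij' (fun d => (d - 1) / p ^ s + 1) (fun m => 1 + (m - 1) * p ^ s)
    ?_ ?_ ?_ ?_ ?_
  · intro d hd
    simp only [Finset.mem_filter, Finset.mem_Icc] at hd ⊢
    obtain ⟨⟨h1, h2⟩, c, hc⟩ := hd
    rw [hc, Nat.mul_div_cancel_left c hps]
    have hlt : p ^ s * c < p ^ s * p ^ (t - s) := by
      rw [mul_comm (p ^ s) (p ^ (t - s)), hmul]; omega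
    have hclt : c < p ^ (t - s) := Nat.lt_of_mul_lt_mul_left hlt
    omega
  · intro m hm
    simp only [Finset.mem_Icc, Finset.mem_filter] at hm ⊢
    obtain ⟨h1, h2⟩ := hm
    have key : (p ^ (t - s) - 1) * p ^ s = p ^ t - p ^ s := by
      rw [Nat.sub_mul, one_mul, hmul]
    have hle : (m - 1) * p ^ s ≤ (p ^ (t - s) - 1) * p ^ s := Nat.mul_le_mul_right _ (by omega)
    rw [key] at hle
    refine ⟨⟨by omega, by omega⟩, ?_⟩
    rw [Nat.add_sub_cancel_left]
    exact dvd_mul_left _ _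
  · intro d hd
    simp only [Finset.mem_filter, Finset.mem_Icc] at hd
    obtain ⟨⟨h1, h2⟩, c, hc⟩ := hd
    rw [hc, Nat.mul_div_cancel_left c hps, Nat.add_sub_cancel, mul_comm c, ← hc]
    omega
  · intro m hm
    simp only [Finset.mem_Icc] at hm
    rw [Nat.add_sub_cancel_left, Nat.mul_div_cancel _ hps]
    omega
  · intro d hd
    simp only [Finset.mem_filter, Finset.mem_Icc] at hd
    obtain ⟨⟨h1, h2⟩, c, hc⟩ := hd
    have harg : 1 + ((d - 1) / p ^ s + 1 - 1) * p ^ s = d := by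
      rw [Nat.add_sub_cancel, hc, Nat.mul_div_cancel_left c hps, mul_comm c, ← hc]
      omega
    rw [harg]

lemma key_nat (p t k : ℕ) (hp : p.Prime) (ht : 1 ≤ t) (hk : 0 < k) :
    MbarK k (p ^ t) + ∑ j ∈ Finset.Icc 1 (p ^ (t - 1)), fk k (p ^ (t - 1) / j)
      = (∑ j ∈ Finset.Icc 1 (p ^ t), fk k (p ^ t / j))
        + ∑ s ∈ Finset.Icc 1 t, (p ^ s - p ^ (s - 1)) *
            ∑ m ∈ Finset.Icc 1 (p ^ (t - s)), fk k (p ^ t / (1 + (m - 1) * p ^ s)) := by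
  rw [MbarK_eq_sum k (p ^ t) hk]
  have hgcd : ∀ d ∈ (Finset.Icc 1 (p ^ t)).filter (fun d => Nat.gcd d (p ^ t) = 1),
      fk k (p ^ t / d) * Nat.gcd (d - 1) (p ^ t)
        = fk k (p ^ t / d) + ∑ s ∈ Finset.Icc 1 t,
            fk k (p ^ t / d) * (if p ^ s ∣ d - 1 then p ^ s - p ^ (s - 1) else 0) := by
    intro d _
    rw [gcd_prime_pow_eq p hp t (d - 1), Nat.mul_add, mul_one, Finset.mul_sum]
  rw [Finset.sum_congr rfl hgcd, Finset.sum_add_distrib]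
  have hB : ∑ d ∈ (Finset.Icc 1 (p ^ t)).filter (fun d => Nat.gcd d (p ^ t) = 1),
        ∑ s ∈ Finset.Icc 1 t,
          fk k (p ^ t / d) * (if p ^ s ∣ d - 1 then p ^ s - p ^ (s - 1) else 0)
      = ∑ s ∈ Finset.Icc 1 t, (p ^ s - p ^ (s - 1)) *
          ∑ m ∈ Finset.Icc 1 (p ^ (t - s)), fk k (p ^ t / (1 + (m - 1) * p ^ s)) := by
    rw [Finset.sum_comm]
    refine Finset.sum_congr rfl ?_
    intro s hs
    simp only [Finset.mem_Icc] at hs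
    simp_rw [mul_ite, mul_zero]
    rw [← Finset.sum_filter, Finset.filter_filter]
    have hFP : ((Finset.Icc 1 (p ^ t)).filter
          (fun d => Nat.gcd d (p ^ t) = 1 ∧ p ^ s ∣ d - 1))
        = (Finset.Icc 1 (p ^ t)).filter (fun d => p ^ s ∣ d - 1) := by
      apply Finset.filter_congr
      intro d hd
      simp only [Finset.mem_Icc] at hd
      constructor
      · rintro ⟨_, h⟩; exact h
      · intro h; exact ⟨coprime_of_dvd_sub p t s d hp hs.1 hd.1 h, h⟩
    rw [hFP, ← Finset.sum_mul, sum_resid p t s k hp hs.1 hs.2, mul_comm]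
  rw [hB]
  have hA : (∑ d ∈ (Finset.Icc 1 (p ^ t)).filter (fun d => Nat.gcd d (p ^ t) = 1),
        fk k (p ^ t / d)) + ∑ j ∈ Finset.Icc 1 (p ^ (t - 1)), fk k (p ^ (t - 1) / j)
      = ∑ j ∈ Finset.Icc 1 (p ^ t), fk k (p ^ t / j) := by
    rw [← sum_mult_p p t k hp ht]
    rw [← Finset.sum_filter_add_sum_filter_not (Finset.Icc 1 (p ^ t))
      (fun d => Nat.gcd d (p ^ t) = 1)]
    congr 1
    apply Finset.sum_congr _ (fun _ _ => rfl)
    apply Finset.filter_congr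
    intro d hd
    simp only [Finset.mem_Icc] at hd
    constructor
    · intro hpd hc
      have hdg : p ∣ Nat.gcd d (p ^ t) := Nat.dvd_gcd hpd (dvd_pow_self p (by omega))
      rw [hc] at hdg
      have := Nat.dvd_one.mp hdg
      have := hp.one_lt
      omega
    · intro hnc
      by_contra hpd
      exact hnc (Nat.Coprime.pow_right t
        (Nat.coprime_comm.mp (hp.coprime_iff_not_dvd.mpr hpd)))
  omega

theorem MbarK_prime_pow (p t k : ℕ) (hp : p.Prime) (ht : 1 ≤ t)
    (hk : 0 < k) (hkn : k ≤ p ^ t) :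
    (MbarK k (p ^ t) : ℤ) =
      (∑ j ∈ Finset.Icc 1 (p ^ t), (fk k (p ^ t / j) : ℤ))
      - (∑ j ∈ Finset.Icc 1 (p ^ (t - 1)), (fk k (p ^ (t - 1) / j) : ℤ))
      + ((p : ℤ) - 1) * ∑ s ∈ Finset.Icc 1 t, (p : ℤ) ^ (s - 1) *
          ∑ m ∈ Finset.Icc 1 (p ^ (t - s)), (fk k (p ^ t / (1 + (m - 1) * p ^ s)) : ℤ) := by
  have key := key_nat p t k hp ht hk
  have hsum : ∑ s ∈ Finset.Icc 1 t, ((p ^ s - p ^ (s - 1) : ℕ) : ℤ) *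
        ∑ m ∈ Finset.Icc 1 (p ^ (t - s)), (fk k (p ^ t / (1 + (m - 1) * p ^ s)) : ℤ)
      = ((p : ℤ) - 1) * ∑ s ∈ Finset.Icc 1 t, (p : ℤ) ^ (s - 1) *
          ∑ m ∈ Finset.Icc 1 (p ^ (t - s)), (fk k (p ^ t / (1 + (m - 1) * p ^ s)) : ℤ) := by
    rw [Finset.mul_sum]
    refine Finset.sum_congr rfl ?_
    intro s hs
    simp only [Finset.mem_Icc] at hs
    have hle : p ^ (s - 1) ≤ p ^ s := Nat.pow_le_pow_right hp.pos (by omega)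
    rw [Nat.cast_sub hle]
    have hps : (p : ℤ) ^ s = (p : ℤ) ^ (s - 1) * (p : ℤ) := by
      rw [← pow_succ]
      congr 1
      omega
    push_cast
    rw [hps]
    ring
  have e1 : (∑ j ∈ Finset.Icc 1 (p ^ t), (fk k (p ^ t / j) : ℤ))
      = ((∑ j ∈ Finset.Icc 1 (p ^ t), fk k (p ^ t / j) : ℕ) : ℤ) := by push_cast; rfl
  have e2 : (∑ j ∈ Finset.Icc 1 (p ^ (t - 1)), (fk k (p ^ (t - 1) / j) : ℤ))
      = ((∑ j ∈ Finset.Icc 1 (p ^ (t - 1)), fk k (p ^ (t - 1) / j) : ℕ) : ℤ) := by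
    push_cast; rfl
  have e3 : ((∑ s ∈ Finset.Icc 1 t, (p ^ s - p ^ (s - 1)) *
        ∑ m ∈ Finset.Icc 1 (p ^ (t - s)), fk k (p ^ t / (1 + (m - 1) * p ^ s)) : ℕ) : ℤ)
      = ∑ s ∈ Finset.Icc 1 t, ((p ^ s - p ^ (s - 1) : ℕ) : ℤ) *
          ∑ m ∈ Finset.Icc 1 (p ^ (t - s)), (fk k (p ^ t / (1 + (m - 1) * p ^ s)) : ℤ) := by
    push_cast; rfl
  rw [e1, e2, ← hsum, ← e3]
  omega
end

section
/- Menon's identity: for every positive integer n, \(\sum_{\substack{1 \le a \le n\\ \gcd(a,n)=1}} \gcd(a-1, n) = \varphi(n)\,\tau(n)\), where \(\varphi\) is Euler's totient function and \(\tau(n)\) is the number of divisors of n. -/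
/-!
Write `gcd (a - 1) n = ∑_{d ∣ gcd (a - 1) n} φ d` and swap the two sums. For `d ∣ n`, the units
`a` of `ZMod n` with `a ≡ 1 (mod d)` form the kernel of the surjection `(ZMod n)ˣ → (ZMod d)ˣ`,
so there are `φ n / φ d` of them, and every divisor `d` of `n` contributes exactly `φ n`.
-/

open Finset

namespace ZMod

variable {n d : ℕ}

theorem card_ker_unitsMap_mul_totient [NeZero n] (hd : d ∣ n) :
    Nat.card (unitsMap hd).ker * d.totient = n.totient := by
  have : NeZero d := ⟨fun h => NeZero.ne n (Nat.eq_zero_of_zero_dvd (h ▸ hd))⟩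
  rw [← card_units_eq_totient, ← card_units_eq_totient, ← Nat.card_eq_fintype_card,
    ← Nat.card_eq_fintype_card, ← Subgroup.card_mul_index (unitsMap hd).ker, Subgroup.index_ker,
    MonoidHom.range_eq_top.mpr (unitsMap_surjective hd), Subgroup.card_top]

theorem dvd_val_sub_one_iff [NeZero n] (hd : d ∣ n) (u : (ZMod n)ˣ) :
    d ∣ ((u : ZMod n) - 1).val ↔ unitsMap hd u = 1 := by
  rw [← natCast_eq_zero_iff, ← cast_eq_val, ← castHom_apply (h := hd), map_sub, map_one,
    sub_eq_zero, Units.ext_iff]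
  rfl

theorem card_filter_dvd_val_sub_one_mul_totient [NeZero n] (hd : d ∣ n) :
    #{u : (ZMod n)ˣ | d ∣ ((u : ZMod n) - 1).val} * d.totient = n.totient := by
  rw [← card_ker_unitsMap_mul_totient hd, Nat.card_eq_fintype_card, ← Fintype.card_subtype]
  simp only [dvd_val_sub_one_iff hd, MonoidHom.mem_ker]

theorem val_natCast_sub_one {a : ℕ} (ha : a ∈ Icc 1 n) : ((a : ZMod n) - 1).val = a - 1 := by
  obtain ⟨h1, hn⟩ := mem_Icc.mp ha
  rw [← Nat.cast_one, ← Nat.cast_sub h1, val_natCast, Nat.mod_eq_of_lt (by omega)]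

theorem sum_filter_Icc_coprime_eq_sum_units [NeZero n] {M : Type*} [AddCommMonoid M]
    (f : ℕ → M) :
    ∑ a ∈ Icc 1 n with a.gcd n = 1, f (a - 1) = ∑ u : (ZMod n)ˣ, f ((u : ZMod n) - 1).val := by
  have natCast_val_sub_one_add_one (x : ZMod n) : ((x - 1).val + 1 : ℕ) = x := by
    rw [Nat.cast_add, natCast_zmod_val, Nat.cast_one, sub_add_cancel]
  refine sum_bij' (fun a ha => unitOfCoprime a (mem_filter.mp ha).2)
    (fun u _ => ((u : ZMod n) - 1).val + 1) (fun _ _ => mem_univ _) ?_ ?_ ?_ ?_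
  · intro u _
    refine mem_filter.mpr ⟨mem_Icc.mpr ⟨by omega, (val_lt _).nat_succ_le⟩, ?_⟩
    rw [← Nat.Coprime, ← isUnit_iff_coprime, natCast_val_sub_one_add_one]
    exact u.isUnit
  · intro a ha
    have ha' := (mem_filter.mp ha).1
    rw [coe_unitOfCoprime, val_natCast_sub_one ha', Nat.sub_add_cancel (mem_Icc.mp ha').1]
  · intro u _
    ext
    rw [coe_unitOfCoprime, natCast_val_sub_one_add_one]
  · intro a ha
    rw [coe_unitOfCoprime, val_natCast_sub_one (mem_filter.mp ha).1]

end ZMod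

theorem Nat.sum_totient_filter_dvd {n : ℕ} (hn : n ≠ 0) (m : ℕ) :
    ∑ d ∈ n.divisors with d ∣ m, d.totient = m.gcd n := by
  rw [← sum_totient (m.gcd n), ← divisors_filter_dvd_of_dvd hn (gcd_dvd_right m n)]
  refine sum_congr (filter_congr fun d hd => ?_) fun _ _ => rfl
  rw [dvd_gcd_iff, and_iff_left (dvd_of_mem_divisors hd)]

/-- Menon's identity. -/
theorem menon_identity (n : ℕ) (hn : 0 < n) :
    ∑ a ∈ (Finset.Icc 1 n).filter (fun a => Nat.gcd a n = 1), Nat.gcd (a - 1) n =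
      Nat.totient n * n.divisors.card := by
  have : NeZero n := ⟨hn.ne'⟩
  calc ∑ a ∈ Icc 1 n with a.gcd n = 1, (a - 1).gcd n
      = ∑ u : (ZMod n)ˣ, ((u : ZMod n) - 1).val.gcd n :=
        ZMod.sum_filter_Icc_coprime_eq_sum_units (·.gcd n)
    _ = ∑ u : (ZMod n)ˣ, ∑ d ∈ n.divisors with d ∣ ((u : ZMod n) - 1).val, d.totient :=
        sum_congr rfl fun _ _ => (Nat.sum_totient_filter_dvd hn.ne' _).symm
    _ = ∑ d ∈ n.divisors, #{u : (ZMod n)ˣ | d ∣ ((u : ZMod n) - 1).val} * d.totient := by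
        simp only [sum_filter]
        rw [sum_comm]
        simp only [← sum_filter, sum_const, smul_eq_mul]
    _ = ∑ d ∈ n.divisors, n.totient := sum_congr rfl fun d hd =>
        ZMod.card_filter_dvd_val_sub_one_mul_totient (Nat.dvd_of_mem_divisors hd)
    _ = n.totient * #n.divisors := by rw [sum_const, smul_eq_mul, mul_comm]
end
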